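/- Let X be a metric surface (a compact metric space homeomorphic to a smooth surface) and, for each n ∈ ℕ, let X_{1/n} be a (1/n)-thickening of X containing X isometrically as a subset. Then there exists n ∈ ℕ and a continuous retraction R: X_{1/n} → X, i.e. a continuous map with R|_X = id_X. -/

import Mathlib

/-!
Common definitions for formalizing "Quasiconformal uniformization of metric
surfaces of higher topology" (D. Meier).
-/

open Set MeasureTheory Filter
open scoped Manifold Topology ENNReal NNReal

noncomputable section

/-! ### Hausdorff measures -/

/-- The Hausdorff `d`-measure on a metric space, with the Borel σ-algebra. -/
noncomputable def hMeasure (d : ℝ) (X : Type*) [MetricSpace X] :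
    @MeasureTheory.Measure X (borel X) :=
  letI : MeasurableSpace X := borel X
  haveI : BorelSpace X := ⟨rfl⟩
  MeasureTheory.Measure.hausdorffMeasure d

/-- Hausdorff 2-measure. -/
noncomputable abbrev hausdorff2 (X : Type*) [MetricSpace X] := hMeasure 2 X

/-- Hausdorff 1-measure. -/
noncomputable abbrev hausdorff1 (X : Type*) [MetricSpace X] := hMeasure 1 X

/-! ### Curves, length, line integrals, modulus -/

/-- A (parametrized) curve in `X`: a map on a compact interval `[a,b]`. -/
structure Curve (X : Type*) where
  a : ℝ
  b : ℝ
  hab : a ≤ b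
  toFun : ℝ → X

/-- The length of a curve: its total variation. -/
noncomputable def Curve.length {X : Type*} [PseudoEMetricSpace X] (γ : Curve X) : ℝ≥0∞ :=
  eVariationOn γ.toFun (Set.Icc γ.a γ.b)

/-- A curve is continuous if its parametrization is continuous on `[a,b]`. -/
def Curve.IsCont {X : Type*} [TopologicalSpace X] (γ : Curve X) : Prop :=
  ContinuousOn γ.toFun (Set.Icc γ.a γ.b)

/-- The line integral `∫_γ ρ` of a Borel function `ρ : X → [0,∞]` along a (rectifiable)
curve, computed through the arclength (natural) parametrization of the curve. -/
noncomputable def Curve.integral {X : Type*} [PseudoEMetricSpace X] (γ : Curve X)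
    (ρ : X → ℝ≥0∞) : ℝ≥0∞ :=
  ∫⁻ t in Set.Icc (0 : ℝ) γ.length.toReal,
    ρ (naturalParameterization γ.toFun (Set.Icc γ.a γ.b) γ.a t)

/-- Postcomposition of a curve with a map. -/
def Curve.comp {X Y : Type*} (u : X → Y) (γ : Curve X) : Curve Y :=
  ⟨γ.a, γ.b, γ.hab, u ∘ γ.toFun⟩

/-- `ρ` is admissible for the curve family `Γ`: `∫_γ ρ ≥ 1` for every
(locally) rectifiable continuous curve in `Γ`. -/
def Admissible {X : Type*} [MetricSpace X] (ρ : X → ℝ≥0∞) (Γ : Set (Curve X)) : Prop :=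
  ∀ γ ∈ Γ, γ.IsCont → γ.length ≠ ⊤ → 1 ≤ γ.integral ρ

/-- The conformal modulus of a family of curves in a metric space `X`, with respect to
the Hausdorff `2`-measure of `X`. -/
noncomputable def modulus {X : Type*} [MetricSpace X] (Γ : Set (Curve X)) : ℝ≥0∞ :=
  ⨅ (ρ : X → ℝ≥0∞) (_ : @Measurable X ℝ≥0∞ (borel X) _ ρ) (_ : Admissible ρ Γ),
    ∫⁻ x, (ρ x) ^ 2 ∂(hausdorff2 X)

/-- Modulus with respect to an explicitly given metric (used for a Riemannian surface). -/
noncomputable def modulusW {M : Type*} (m : MetricSpace M) (Γ : Set (Curve M)) : ℝ≥0∞ :=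
  letI := m; modulus Γ

noncomputable def Curve.lengthW {M : Type*} (m : MetricSpace M) (γ : Curve M) : ℝ≥0∞ :=
  letI := m; γ.length

noncomputable def Curve.integralW {M : Type*} (m : MetricSpace M) (γ : Curve M)
    (ρ : M → ℝ≥0∞) : ℝ≥0∞ :=
  letI := m; γ.integral ρ

/-! ### Geodesic conditions -/

/-- A metric space is locally geodesic if every point has a neighborhood `U` such that
any two points of `U` are joined by a curve (in `X`) whose length equals their distance. -/
def IsLocallyGeodesicSpace (X : Type*) [MetricSpace X] : Prop :=
  ∀ x : X, ∃ U ∈ 𝓝 x, ∀ y ∈ U, ∀ z ∈ U, ∃ γ : Curve X,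
    γ.IsCont ∧ γ.toFun γ.a = y ∧ γ.toFun γ.b = z ∧ γ.length = edist y z

/-- A metric space is geodesic if any two points are joined by a geodesic. -/
def IsGeodesicSpace (X : Type*) [MetricSpace X] : Prop :=
  ∀ y z : X, ∃ γ : Curve X,
    γ.IsCont ∧ γ.toFun γ.a = y ∧ γ.toFun γ.b = z ∧ γ.length = edist y z

/-! ### Monotone maps -/

/-- A map is monotone (in the sense of continua theory) if every point preimage
is connected. -/
def IsMonotoneMap {M X : Type*} [TopologicalSpace M] [TopologicalSpace X] (u : M → X) : Prop :=
  ∀ x : X, IsConnected (u ⁻¹' {x})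

/-! ### biLipschitz maps -/

/-- `f` is biLipschitz on `s` with respect to the given distance functions. -/
def BiLipschitzOnW {Z Y : Type*} (dZ : Z → Z → ℝ) (dY : Y → Y → ℝ)
    (f : Z → Y) (s : Set Z) : Prop :=
  ∃ L : ℝ, 1 ≤ L ∧ ∀ p ∈ s, ∀ q ∈ s,
    dZ p q ≤ L * dY (f p) (f q) ∧ dY (f p) (f q) ≤ L * dZ p q

/-- `f` is biLipschitz on `s` (instance-based version). -/
def BiLipschitzOn {Z Y : Type*} [PseudoMetricSpace Z] [PseudoMetricSpace Y]
    (f : Z → Y) (s : Set Z) : Prop :=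
  BiLipschitzOnW dist dist f s

/-! ### Smooth surfaces -/

/-- The boundary `∂M` of a surface `M`, modelled on the Euclidean half-plane. -/
def surfaceBoundary (M : Type*) [TopologicalSpace M]
    [ChartedSpace (EuclideanHalfSpace 2) M] : Set M :=
  (𝓡∂ 2).boundary M


/-- The velocity vector of a curve `γ : ℝ → M` at time `t` (the tangent space of the
surface `M` is definitionally `EuclideanSpace ℝ (Fin 2)`). -/
noncomputable def curveVelocity {M : Type*} [TopologicalSpace M]
    [ChartedSpace (EuclideanHalfSpace 2) M] (γ : ℝ → M) (t : ℝ) :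
    EuclideanSpace ℝ (Fin 2) :=
  mfderiv (𝓘(ℝ, ℝ)) (𝓡∂ 2) γ t (show TangentSpace (𝓘(ℝ, ℝ)) t from (1 : ℝ))

/-- A Riemannian metric on a smooth surface `M` (modelled on the half-plane
`EuclideanHalfSpace 2`; the tangent space at every point is definitionally
`EuclideanSpace ℝ (Fin 2)`). It is recorded together with the metric-space structure it
induces: a smooth family of inner products on the tangent spaces, such that the distance
between two points is the infimum of the lengths of `C¹` curves joining them. -/
structure RiemannianMetric (M : Type*) [tM : TopologicalSpace M]
    [ChartedSpace (EuclideanHalfSpace 2) M] extends MetricSpace M where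
  /-- The induced metric induces the manifold topology. -/
  compat : toMetricSpace.toUniformSpace.toTopologicalSpace = tM
  /-- The inner product on the tangent space at each point, as a continuous bilinear form. -/
  innerCLM : M → EuclideanSpace ℝ (Fin 2) →L[ℝ] EuclideanSpace ℝ (Fin 2) →L[ℝ] ℝ
  smooth : ContMDiff (𝓡∂ 2)
    (𝓘(ℝ, EuclideanSpace ℝ (Fin 2) →L[ℝ] EuclideanSpace ℝ (Fin 2) →L[ℝ] ℝ)) (⊤ : ℕ∞) innerCLM
  symm : ∀ x u v, innerCLM x u v = innerCLM x v u
  posdef : ∀ (x : M) (v : EuclideanSpace ℝ (Fin 2)), v ≠ 0 → 0 < innerCLM x v v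
  /-- The distance is the infimum of Riemannian lengths of `C¹` curves. -/
  dist_eq : ∀ x y : M, ENNReal.ofReal (toMetricSpace.dist x y) =
    ⨅ (γ : ℝ → M) (_ : ContinuousOn γ (Set.Icc 0 1))
      (_ : ContMDiffOn (𝓘(ℝ, ℝ)) (𝓡∂ 2) 1 γ (Set.Icc 0 1))
      (_ : γ 0 = x) (_ : γ 1 = y),
      ∫⁻ t in Set.Icc (0 : ℝ) 1, ENNReal.ofReal
        (Real.sqrt (innerCLM (γ t) (curveVelocity γ t) (curveVelocity γ t)))

namespace RiemannianMetric

variable {M : Type*} [TopologicalSpace M] [ChartedSpace (EuclideanHalfSpace 2) M]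

/-- The underlying metric space structure. -/
noncomputable def ms (g : RiemannianMetric M) : MetricSpace M := g.toMetricSpace

/-- The Riemannian distance function. -/
noncomputable def distFn (g : RiemannianMetric M) : M → M → ℝ :=
  letI := g.ms; fun x y => dist x y

/-- The Riemannian (Hausdorff) area measure `H²_g` on `M`. -/
noncomputable def area (g : RiemannianMetric M) := @hausdorff2 M g.ms

end RiemannianMetric

/-! ### Weakly monotone parametrizations -/

/-- `f : S → X` is a weakly monotone parametrization of `B ⊆ X`: a uniform limit of
homeomorphisms from `S` onto `B` (here: continuous injections with range `B`;
on a compact Hausdorff domain these are exactly the homeomorphisms onto `B`). -/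
def WeaklyMonotoneParam {S X : Type*} [TopologicalSpace S] [MetricSpace X]
    (B : Set X) (f : S → X) : Prop :=
  ∃ F : ℕ → S → X,
    (∀ n, Continuous (F n) ∧ Function.Injective (F n) ∧ Set.range (F n) = B) ∧
    TendstoUniformly F f Filter.atTop

/-! ### Newton–Sobolev maps, upper gradients, energy -/

section Sobolev

variable {M X : Type*}

/-- `ρ` is a weak upper gradient of `u : M → X`, with respect to the metric `m` on `M`:
the upper gradient inequality holds along all rectifiable curves outside a family of
modulus zero. -/
def IsWeakUpperGradientW (m : MetricSpace M) [MetricSpace X] (u : M → X)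
    (ρ : M → ℝ≥0∞) : Prop :=
  (@Measurable M ℝ≥0∞ (@borel M m.toUniformSpace.toTopologicalSpace) _ ρ) ∧
  ∃ Γ₀ : Set (Curve M), modulusW m Γ₀ = 0 ∧
    ∀ γ : Curve M, γ ∉ Γ₀ → (letI := m; γ.IsCont) → γ.lengthW m ≠ ⊤ →
      edist (u (γ.toFun γ.a)) (u (γ.toFun γ.b)) ≤ γ.integralW m ρ

/-- The Reshetnyak energy `E²₊(u, g)`: the (infimum of the) integral `∫ ρ_u² dH²_g` for
the (minimal) weak upper gradient of `u`. -/
noncomputable def energyW (m : MetricSpace M) [MetricSpace X] (u : M → X) : ℝ≥0∞ :=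
  ⨅ (ρ : M → ℝ≥0∞) (_ : IsWeakUpperGradientW m u ρ),
    ∫⁻ z, (ρ z) ^ 2 ∂(@hausdorff2 M m)

/-- `u : M → X` belongs to the Newton–Sobolev space `N^{1,2}(M,X)` (with respect to a
metric `m` on `M`): it is measurable, essentially separably valued, square integrable, and
has a weak upper gradient in `L²`. -/
def IsSobolevW (m : MetricSpace M) [MetricSpace X] (u : M → X) : Prop :=
  (@Measurable M X (@borel M m.toUniformSpace.toTopologicalSpace) (borel X) u) ∧
  (∃ s : Set X, TopologicalSpace.IsSeparable s ∧ ∀ᵐ z ∂(@hausdorff2 M m), u z ∈ s) ∧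
  (∃ x : X, ∫⁻ z, (edist (u z) x) ^ 2 ∂(@hausdorff2 M m) ≠ ⊤) ∧
  (∃ ρ : M → ℝ≥0∞, IsWeakUpperGradientW m u ρ ∧ ∫⁻ z, (ρ z) ^ 2 ∂(@hausdorff2 M m) ≠ ⊤)

end Sobolev

section Trace

variable {M X : Type*} [TopologicalSpace M] [ChartedSpace (EuclideanHalfSpace 2) M]
  [MetricSpace X]

/-- `f` is (a representative of) the trace of the Sobolev map `u : M → X` on the boundary
of the surface `M`: near every boundary point there is a biLipschitz collar
`ψ : (0,1) × [0,1) → M` along which `u` converges to `f` for a.e. parameter `s`. -/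
def IsTraceOfW (m : MetricSpace M) (u f : M → X) : Prop :=
  ∀ z ∈ surfaceBoundary M, ∃ V : Set M, IsOpen V ∧ z ∈ V ∧
    ∃ ψ : ℝ × ℝ → M, ∃ L : ℝ, 1 ≤ L ∧
      (∀ p ∈ Set.Ioo (0:ℝ) 1 ×ˢ Set.Ico (0:ℝ) 1, ∀ q ∈ Set.Ioo (0:ℝ) 1 ×ˢ Set.Ico (0:ℝ) 1,
        dist p q ≤ L * m.dist (ψ p) (ψ q) ∧ m.dist (ψ p) (ψ q) ≤ L * dist p q) ∧
      ψ '' (Set.Ioo (0:ℝ) 1 ×ˢ Set.Ioo (0:ℝ) 1) = V \ surfaceBoundary M ∧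
      ψ '' (Set.Ioo (0:ℝ) 1 ×ˢ {(0:ℝ)}) = V ∩ surfaceBoundary M ∧
      ∀ᵐ s ∂(volume.restrict (Set.Ioo (0:ℝ) 1)),
        Filter.Tendsto (fun t => u (ψ (s, t))) (nhdsWithin 0 (Set.Ioi 0))
          (nhds (f (ψ (s, 0))))

end Trace

/-! ### Polyhedral complexes and triangulations -/

/-- A compact convex polytope in `ℝⁿ`. -/
def IsPolytope {n : ℕ} (C : Set (EuclideanSpace ℝ (Fin n))) : Prop :=
  ∃ s : Finset (EuclideanSpace ℝ (Fin n)), C = convexHull ℝ (s : Set (EuclideanSpace ℝ (Fin n)))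

/-- The dimension of a cell: the dimension of its affine span. -/
noncomputable def cellDim {n : ℕ} (C : Set (EuclideanSpace ℝ (Fin n))) : ℕ :=
  Module.finrank ℝ (vectorSpan ℝ C)

/-- A (finite) polyhedral complex in `ℝⁿ`: a finite collection of compact convex polytopes
(cells), containing each (nonempty, exposed) face of each of its cells, in which the
intersection of two cells is a face of each of them. -/
structure PolyhedralComplex (n : ℕ) where
  cells : Finset (Set (EuclideanSpace ℝ (Fin n)))
  nonempty_cells : ∀ C ∈ cells, C.Nonempty
  polytope : ∀ C ∈ cells, IsPolytope C
  faces_mem : ∀ C ∈ cells, ∀ F : Set (EuclideanSpace ℝ (Fin n)),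
    F.Nonempty → IsExposed ℝ C F → F ∈ cells
  inter_face : ∀ C ∈ cells, ∀ D ∈ cells, (C ∩ D).Nonempty →
    IsExposed ℝ C (C ∩ D) ∧ IsExposed ℝ D (C ∩ D)

namespace PolyhedralComplex

variable {n : ℕ}

/-- The carrier (underlying set) of a polyhedral complex. -/
def carrier (K : PolyhedralComplex n) : Set (EuclideanSpace ℝ (Fin n)) :=
  ⋃₀ (K.cells : Set (Set (EuclideanSpace ℝ (Fin n))))

/-- The `j`-skeleton: the union of all cells of dimension at most `j`. -/
def skeleton (K : PolyhedralComplex n) (j : ℕ) : Set (EuclideanSpace ℝ (Fin n)) :=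
  ⋃₀ {C | C ∈ K.cells ∧ cellDim C ≤ j}

end PolyhedralComplex

/-- A triangulation `h : K → M` of a smooth surface `M`: a homeomorphism from (the carrier
of) a 2-dimensional polyhedral complex onto `M` which is a `C¹`-diffeomorphism onto its
image on every 2-cell. (Since the carrier is compact and `M` is Hausdorff, a continuous
bijection is automatically a homeomorphism.) -/
structure Triangulation (M : Type*) [TopologicalSpace M]
    [ChartedSpace (EuclideanHalfSpace 2) M] where
  n : ℕ
  K : PolyhedralComplex n
  dim_le : ∀ C ∈ K.cells, cellDim C ≤ 2
  toFun : EuclideanSpace ℝ (Fin n) → M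
  contOn : ContinuousOn toFun K.carrier
  bij : Set.BijOn toFun K.carrier Set.univ
  smooth_on_two_cells : ∀ C ∈ K.cells, cellDim C = 2 →
    ContMDiffOn (𝓘(ℝ, EuclideanSpace ℝ (Fin n))) (𝓡∂ 2) 1 toFun C ∧
    ∀ x ∈ C, Function.Injective
      (⇑(mfderivWithin (𝓘(ℝ, EuclideanSpace ℝ (Fin n))) (𝓡∂ 2) toFun C x))

namespace Triangulation

variable {M : Type*} [TopologicalSpace M] [ChartedSpace (EuclideanHalfSpace 2) M]

/-- The subcomplex `∂K`, preimage of the boundary of `M`. -/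
def bdryK (T : Triangulation M) : Set (EuclideanSpace ℝ (Fin T.n)) :=
  T.toFun ⁻¹' surfaceBoundary M ∩ T.K.carrier

/-- The `j`-skeleton of the triangulation. -/
def skel (T : Triangulation M) (j : ℕ) : Set (EuclideanSpace ℝ (Fin T.n)) :=
  T.K.skeleton j

/-- The modified 1-skeleton `K̂¹ = (K¹ \ ∂K) ∪ K⁰`. -/
def skelHat (T : Triangulation M) : Set (EuclideanSpace ℝ (Fin T.n)) :=
  (T.skel 1 \ T.bdryK) ∪ T.skel 0

end Triangulation

/-! ### Homotopies -/

/-- `f` and `g` are homotopic on `S` relative to `A ⊆ S` (the homotopy is constant in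
time on `A`). -/
def HomotopicRelOn {Z Y : Type*} [TopologicalSpace Z] [TopologicalSpace Y]
    (f g : Z → Y) (S A : Set Z) : Prop :=
  ∃ H : Z × ℝ → Y, ContinuousOn H (S ×ˢ Set.Icc (0:ℝ) 1) ∧
    (∀ z ∈ S, H (z, 0) = f z ∧ H (z, 1) = g z) ∧
    (∀ z ∈ A, ∀ t ∈ Set.Icc (0:ℝ) 1, H (z, t) = f z)

/-- `f` and `g` (defined on the 1-skeleton `S`, with `A = ∂K`) are homotopic relative to a
boundary `B ⊆ Y`: there is a homotopy between them whose restriction to `A` is a weakly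
monotone parametrization of `B` at each time. -/
def HomotopicRelBdryIn {Z Y : Type*} [TopologicalSpace Z] [MetricSpace Y]
    (f g : Z → Y) (S A : Set Z) (B : Set Y) : Prop :=
  ∃ H : Z × ℝ → Y, ContinuousOn H (S ×ˢ Set.Icc (0:ℝ) 1) ∧
    (∀ z ∈ S, H (z, 0) = f z ∧ H (z, 1) = g z) ∧
    ∀ t ∈ Set.Icc (0:ℝ) 1, WeaklyMonotoneParam B (fun z : A => H (z.1, t))

section OneHomotopy

variable {M X : Type*} [TopologicalSpace M] [ChartedSpace (EuclideanHalfSpace 2) M]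
  [MetricSpace X]

/-- The (Sobolev) map `u : M → X` is 1-homotopic to the continuous map `φ` relative to the
boundary `B = ∂X`: for some triangulation of `M`, a continuous representative of the
restriction of `u` to the 1-skeleton (defined `H¹`-a.e. on the interior edges and by the
trace of `u` on `∂K`) is homotopic to the restriction of `φ` relative to `∂X`. -/
def OneHomotopicRelW (m : MetricSpace M) (u φ : M → X) (B : Set X) : Prop :=
  ∃ T : Triangulation M, ∃ ϱ : EuclideanSpace ℝ (Fin T.n) → X,
    ContinuousOn ϱ (T.skel 1) ∧
    (∀ᵐ z ∂((hausdorff1 (EuclideanSpace ℝ (Fin T.n))).restrict (T.skel 1 \ T.bdryK)),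
      ϱ z = u (T.toFun z)) ∧
    (∃ f : M → X, IsTraceOfW m u f ∧ ∀ z ∈ T.bdryK, ϱ z = f (T.toFun z)) ∧
    HomotopicRelBdryIn ϱ (φ ∘ T.toFun) (T.skel 1) (T.bdryK) B

/-- The family `Λ(M, φ, X)` of Sobolev maps `u ∈ N^{1,2}(M,X)` whose trace has a continuous
representative which is a weakly monotone parametrization of `∂X = φ(∂M)`, and which are
1-homotopic to `φ` relative to `∂X`. -/
def LambdaSet (φ : M → X) : Set (M → X) :=
  {u | ∃ g : RiemannianMetric M,
    IsSobolevW g.toMetricSpace u ∧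
    (∃ f : M → X, IsTraceOfW g.toMetricSpace u f ∧
      WeaklyMonotoneParam (φ '' surfaceBoundary M)
        (fun z : (surfaceBoundary M) => f z.1)) ∧
    OneHomotopicRelW g.toMetricSpace u φ (φ '' surfaceBoundary M)}

end OneHomotopy

/-! ### Injective metric spaces and injective hulls -/

/-- A metric space `E` is injective: every 1-Lipschitz map into `E` defined on a subset of
a metric space extends 1-Lipschitzly to the whole space. -/
def IsInjectiveMetricSpace (E : Type*) [MetricSpace E] : Prop :=
  ∀ (Z : Type) (_ : MetricSpace Z) (A : Set Z) (f : A → E), LipschitzWith 1 f →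
    ∃ F : Z → E, LipschitzWith 1 F ∧ ∀ a : A, F a = f a

/-- `ι : X → E` realizes `E` as an injective hull of `X`: an isometric embedding into an
injective metric space that is minimal, in the sense that no proper (injective) subspace
of `E` containing `ι(X)` is injective. -/
def IsInjectiveHull {X E : Type*} [MetricSpace X] [MetricSpace E] (ι : X → E) : Prop :=
  Isometry ι ∧ IsInjectiveMetricSpace E ∧
    ∀ E' : Set E, Set.range ι ⊆ E' → IsInjectiveMetricSpace E' → E' = Set.univ

/-- The open `r`-neighborhood of the image of `ι : X → E` (e.g. of `X` inside its
injective hull). -/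
def nbhdOfImage {X E : Type*} [MetricSpace E] (ι : X → E) (r : ℝ) : Set E :=
  {e : E | ∃ x : X, dist e (ι x) < r}

/-- `Y` is an `ε`-thickening of `X` via the isometric embedding `j : X → Y`. -/
def IsThickening {X Y : Type*} [MetricSpace X] [MetricSpace Y] (ε : ℝ≥0∞) (j : X → Y) :
    Prop :=
  Isometry j ∧ EMetric.hausdorffEdist (Set.range j) (Set.univ : Set Y) < ε

/-! ### Parametrized (Hausdorff) area -/

/-- Coercion `ℕ∞ → ℝ≥0∞`. -/
def enatToENNReal : ℕ∞ → ℝ≥0∞ := WithTop.map (fun k : ℕ => (k : ℝ≥0))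

/-- The parametrized (Hausdorff) area of `v` on the set `S`. By the area formula, for
Lipschitz (and Sobolev) maps the integral of the jacobian of the approximate metric
derivative equals the integral over the target of the multiplicity function. -/
noncomputable def parametrizedArea {Z Y : Type*} [MetricSpace Y] (v : Z → Y) (S : Set Z) :
    ℝ≥0∞ :=
  ∫⁻ y, enatToENNReal ((v ⁻¹' {y} ∩ S).encard) ∂(hausdorff2 Y)

/-! ### Cell-like sets and maps -/

/-- The Hilbert cube. -/
def HilbertCube : Type := ℕ → (Set.Icc (0:ℝ) 1)

instance : TopologicalSpace HilbertCube := by unfold HilbertCube; infer_instance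

/-- A compact set is cell-like if it admits a topological embedding into the Hilbert cube
whose image is null-homotopic in every neighborhood of itself. -/
def IsCellLikeSet {Y : Type*} [TopologicalSpace Y] (K : Set Y) : Prop :=
  IsCompact K ∧ ∃ e : K → HilbertCube, Continuous e ∧ Function.Injective e ∧
    ∀ U : Set HilbertCube, IsOpen U → Set.range e ⊆ U →
      ∃ (H : K × ℝ → HilbertCube) (c : HilbertCube), Continuous H ∧
        (∀ k : K, H (k, 0) = e k ∧ H (k, 1) = c) ∧
        (∀ (k : K) (t : ℝ), t ∈ Set.Icc (0:ℝ) 1 → H (k, t) ∈ U)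

/-- A continuous surjection is cell-like if all its fibers are cell-like sets. -/
def IsCellLikeMap {M X : Type*} [TopologicalSpace M] [TopologicalSpace X] (v : M → X) :
    Prop :=
  Continuous v ∧ Function.Surjective v ∧ ∀ x : X, IsCellLikeSet (v ⁻¹' {x})

/-! ### Jordan curves and domains -/

/-- A Jordan curve in `X`: a subset homeomorphic to the circle `S¹`. -/
def IsJordanCurve {X : Type*} [TopologicalSpace X] (S : Set X) : Prop :=
  Nonempty (S ≃ₜ (Metric.sphere (0 : EuclideanSpace ℝ (Fin 2)) 1))

/-- A Jordan domain in `X`: an open subset homeomorphic to the open unit disc whose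
topological boundary is a Jordan curve. -/
def IsJordanDomain {X : Type*} [TopologicalSpace X] (Ω : Set X) : Prop :=
  IsOpen Ω ∧ Nonempty (Ω ≃ₜ (Metric.ball (0 : EuclideanSpace ℝ (Fin 2)) 1)) ∧
  IsJordanCurve (frontier Ω)

/-! ### Quasiconformality and quasisymmetry -/

/-- A map between metric surfaces is geometrically `K`-quasiconformal (on all of `Z`) if
it quasi-preserves the modulus of every curve family. -/
def IsGeomQCWith {Z X : Type*} [MetricSpace Z] [MetricSpace X] (K : ℝ≥0∞) (u : Z → X) :
    Prop :=
  ∀ Γ : Set (Curve Z),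
    modulus Γ ≤ K * modulus (Curve.comp u '' Γ) ∧
    modulus (Curve.comp u '' Γ) ≤ K * modulus Γ

/-- A homeomorphism `f` between metric spaces is quasisymmetric: there is a homeomorphism
`η : [0,∞) → [0,∞)` such that `d(f x, f y) ≤ η(t) · d(f x, f z)` whenever
`d(x,y) ≤ t · d(x,z)`. -/
def IsQuasisymmetryW {Z X : Type*} (dZ : Z → Z → ℝ) (dX : X → X → ℝ) (f : Z → X) : Prop :=
  ∃ η : ℝ → ℝ, ContinuousOn η (Set.Ici 0) ∧ StrictMonoOn η (Set.Ici 0) ∧ η 0 = 0 ∧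
    η '' Set.Ici 0 = Set.Ici 0 ∧
    ∀ (x y z : Z) (t : ℝ), 0 ≤ t → dZ x y ≤ t * dZ x z → dX (f x) (f y) ≤ η t * dX (f x) (f z)

/-! ### Essential oscillation -/

/-- The essential oscillation of `u` on the `δ`-ball around `z` (with respect to the
metric `m` on the domain): the infimum of the diameters of images of full-measure subsets
of the ball. -/
noncomputable def essOscW {M X : Type*} [MetricSpace X] (m : MetricSpace M) (u : M → X)
    (z : M) (δ : ℝ) : ℝ≥0∞ :=
  ⨅ (A : Set M) (_ : A ⊆ {p | m.dist p z < δ})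
    (_ : (@hausdorff2 M m) ({p | m.dist p z < δ} \ A) = 0),
    EMetric.diam (u '' A)

/-! ### Conformal diffeomorphisms -/

/-- `ψ` is a conformal diffeomorphism from `(M, g)` to `(M, h)`: a smooth diffeomorphism
whose derivative pulls `h` back to a (pointwise positive) multiple of `g`. -/
def IsConformalDiffeo {M : Type*} [TopologicalSpace M]
    [ChartedSpace (EuclideanHalfSpace 2) M] (g h : RiemannianMetric M) (ψ : M → M) :
    Prop :=
  Function.Bijective ψ ∧ ContMDiff (𝓡∂ 2) (𝓡∂ 2) (⊤ : ℕ∞) ψ ∧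
  (∃ ψinv : M → M, Function.LeftInverse ψinv ψ ∧ ContMDiff (𝓡∂ 2) (𝓡∂ 2) (⊤ : ℕ∞) ψinv) ∧
  ∃ lam : M → ℝ, (∀ x, 0 < lam x) ∧ ∀ (x : M) (w₁ w₂ : EuclideanSpace ℝ (Fin 2)),
    h.innerCLM (ψ x) (mfderiv (𝓡∂ 2) (𝓡∂ 2) ψ x w₁) (mfderiv (𝓡∂ 2) (𝓡∂ 2) ψ x w₂)
      = lam x * g.innerCLM x w₁ w₂

/-- The family `Λ(M, X)` of Sobolev maps `u ∈ N^{1,2}(M, X)` that are uniform limits of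
homeomorphisms from `M` to `X`. -/
def LambdaHomeoSet (M : Type*) [TopologicalSpace M]
    [ChartedSpace (EuclideanHalfSpace 2) M] (X : Type*) [MetricSpace X] :
    Set (M → X) :=
  {u | (∃ g : RiemannianMetric M, IsSobolevW g.toMetricSpace u) ∧
    ∃ F : ℕ → M ≃ₜ X, TendstoUniformly (fun n => ⇑(F n)) u Filter.atTop}


/-!
A compact surface is an absolute neighborhood extensor (ANE) for metric spaces. Open subsets of
the half-plane are ANEs by Tietze's theorem, and `P ∪ Q` (`P`, `Q` open) is an ANE as soon as
`P`, `Q` and `P ∩ Q` are: split the domain by a closed cover `Z₁ ∪ Z₂` with `f` mapping into `P`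
on `Z₁` and into `Q` on `Z₂`, extend first into `P ∩ Q` near the interface `Z₁ ∩ Z₂`, then on
each side separately. A finite chart cover then does the rest.

`X` embeds isometrically into `C(X, ℝ)` by `a ↦ dist a ·`; the ANE property extends the inverse
of this embedding to an open set, which contains a uniform `δ`-neighborhood of the compact image.
In a thickening `Y ⊇ X`, the formula `y ↦ dist y ·` extends the embedding 1-Lipschitzly to `Y`,
with values in that neighborhood once `Y` is a `δ`-thickening; composing gives the retraction.
-/

universe u

/-- Absolute neighborhood extensor for metric spaces. -/
def IsANE {S : Type*} [TopologicalSpace S] (P : Set S) : Prop :=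
  ∀ (Z : Type) [MetricSpace Z] (A : Set Z) (f : Z → S), IsClosed A → ContinuousOn f A →
    MapsTo f A P → ∃ U, IsOpen U ∧ A ⊆ U ∧ ∃ g : Z → S, ContinuousOn g U ∧ EqOn g f A ∧ MapsTo g U P

variable {S : Type*} [TopologicalSpace S]

theorem isANE_empty : IsANE (∅ : Set S) := by
  intro Z _ A f _ _ hfA
  exact ⟨∅, isOpen_empty, fun a ha => (hfA ha).elim, f, continuousOn_empty f, eqOn_refl f A,
    mapsTo_empty f ∅⟩

theorem IsOpen.isANE {H : Type*} [TopologicalSpace H] [TietzeExtension.{0} H] {V : Set H}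
    (hV : IsOpen V) : IsANE V := by
  intro Z _ A f hA hf hfV
  obtain ⟨g, hg⟩ := ContinuousMap.exists_restrict_eq hA ⟨A.domRestrict f, hf.domRestrict⟩
  have hgf : EqOn g f A := fun a ha => congrArg (· ⟨a, ha⟩) hg
  exact ⟨g ⁻¹' V, hV.preimage g.continuous, fun a ha => mem_preimage.2 (hgf ha ▸ hfV ha), g,
    g.continuous.continuousOn, hgf, fun _ hz => hz⟩

theorem IsANE.of_image_openPartialHomeomorph {T : Type*} [TopologicalSpace T]
    (e : OpenPartialHomeomorph S T) {P : Set S} (hPe : P ⊆ e.source) (hP : IsANE (e '' P)) :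
    IsANE P := by
  intro Z _ A f hA hf hfP
  obtain ⟨U, hU, hAU, g, hg, hgf, hgP⟩ := hP Z A (e ∘ f) hA
    (e.continuousOn.comp hf (hfP.mono_right hPe)) (fun a ha => mem_image_of_mem e (hfP ha))
  refine ⟨U, hU, hAU, e.symm ∘ g,
    e.continuousOn_symm.comp hg (hgP.mono_right (e.mapsTo.mono_left hPe).image_subset),
    fun a ha => ?_, fun z hz => ?_⟩
  · simp [hgf ha, e.left_inv (hPe (hfP ha))]
  · obtain ⟨p, hp, hpz⟩ := hgP hz
    simp [← hpz, e.left_inv (hPe hp), hp]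

theorem isANE_univ_of_homeomorph {T : Type*} [TopologicalSpace T] (e : S ≃ₜ T)
    (h : IsANE (univ : Set S)) : IsANE (univ : Set T) :=
  .of_image_openPartialHomeomorph e.symm.toOpenPartialHomeomorph (by simp) (by simpa using h)

theorem IsANE.exists_extension_union {P : Set S} (hP : IsANE P) {Z : Type} [MetricSpace Z]
    {A K : Set Z} {f g : Z → S} (hA : IsClosed A) (hK : IsClosed K) (hf : ContinuousOn f A)
    (hg : ContinuousOn g K) (hfg : EqOn f g (A ∩ K)) (hfP : MapsTo f A P) (hgP : MapsTo g K P) :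
    ∃ U, IsOpen U ∧ A ∪ K ⊆ U ∧
      ∃ h : Z → S, ContinuousOn h U ∧ EqOn h f A ∧ EqOn h g K ∧ MapsTo h U P := by
  classical
  have hfA : EqOn (A.piecewise f g) f A := piecewise_eqOn A f g
  have hgK : EqOn (A.piecewise f g) g K := fun z hz => by
    by_cases hzA : z ∈ A
    · simp [hzA, hfg ⟨hzA, hz⟩]
    · simp [hzA]
  obtain ⟨U, hU, hAKU, h, hh, hhAK, hhP⟩ := hP Z (A ∪ K) (A.piecewise f g) (hA.union hK)
    ((hf.congr hfA).union_of_isClosed (hg.congr hgK) hA hK)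
    (fun z hz => hz.elim (fun hzA => hfA hzA ▸ hfP hzA) (fun hzK => hgK hzK ▸ hgP hzK))
  exact ⟨U, hU, hAKU, h, hh, (hhAK.mono subset_union_left).trans hfA,
    (hhAK.mono subset_union_right).trans hgK, hhP⟩

theorem ContinuousOn.exists_isClosed_cover_mapsTo {Z : Type*} [TopologicalSpace Z]
    [NormalSpace Z] {A : Set Z} {f : Z → S} {P Q : Set S} (hA : IsClosed A)
    (hf : ContinuousOn f A) (hP : IsOpen P) (hQ : IsOpen Q) (hfA : MapsTo f A (P ∪ Q)) :
    ∃ Z₁ Z₂ : Set Z, IsClosed Z₁ ∧ IsClosed Z₂ ∧ Z₁ ∪ Z₂ = univ ∧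
      MapsTo f (A ∩ Z₁) P ∧ MapsTo f (A ∩ Z₂) Q := by
  obtain ⟨O₁, O₂, hO₁, hO₂, hAO₁, hAO₂, hO⟩ := normal_separation
    (hf.preimage_isClosed_of_isClosed hA hP.isClosed_compl)
    (hf.preimage_isClosed_of_isClosed hA hQ.isClosed_compl)
    (disjoint_left.2 fun z ⟨hzA, hzP⟩ ⟨_, hzQ⟩ => (hfA hzA).elim hzP hzQ)
  refine ⟨O₁ᶜ, O₂ᶜ, hO₁.isClosed_compl, hO₂.isClosed_compl, ?_, ?_, ?_⟩
  · rw [← compl_inter, hO.inter_eq, compl_empty]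
  · exact fun z ⟨hzA, hz⟩ => by_contra fun hzP => hz (hAO₁ ⟨hzA, hzP⟩)
  · exact fun z ⟨hzA, hz⟩ => by_contra fun hzQ => hz (hAO₂ ⟨hzA, hzQ⟩)

theorem IsANE.union {P Q : Set S} (hPo : IsOpen P) (hQo : IsOpen Q) (hP : IsANE P)
    (hQ : IsANE Q) (hPQ : IsANE (P ∩ Q)) : IsANE (P ∪ Q) := by
  intro Z _ A f hA hf hfA
  obtain ⟨Z₁, Z₂, hZ₁, hZ₂, hZ, hfP, hfQ⟩ := hf.exists_isClosed_cover_mapsTo hA hPo hQo hfA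
  obtain ⟨U₀, hU₀, hAU₀, g₀, hg₀, hg₀f, hg₀PQ⟩ := hPQ Z (A ∩ (Z₁ ∩ Z₂)) f
    (hA.inter (hZ₁.inter hZ₂)) (hf.mono inter_subset_left)
    fun z hz => ⟨hfP ⟨hz.1, hz.2.1⟩, hfQ ⟨hz.1, hz.2.2⟩⟩
  obtain ⟨V, hV, hAV, hVU₀⟩ := normal_exists_closure_subset (hA.inter (hZ₁.inter hZ₂)) hU₀ hAU₀
  set K := closure V ∩ (Z₁ ∩ Z₂)
  have hK : IsClosed K := isClosed_closure.inter (hZ₁.inter hZ₂)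
  have hg₀K : ContinuousOn g₀ K := hg₀.mono (inter_subset_left.trans hVU₀)
  have hfg₀ {Zᵢ : Set Z} : EqOn f g₀ (A ∩ Zᵢ ∩ K) := fun z hz => (hg₀f ⟨hz.1.1, hz.2.2⟩).symm
  obtain ⟨U₁, hU₁, hU₁sub, g₁, hg₁, hg₁f, hg₁g₀, hg₁P⟩ := hP.exists_extension_union
    (hA.inter hZ₁) hK (hf.mono inter_subset_left) hg₀K hfg₀ hfP
    fun z hz => (hg₀PQ (hVU₀ hz.1)).1
  obtain ⟨U₂, hU₂, hU₂sub, g₂, hg₂, hg₂f, hg₂g₀, hg₂Q⟩ := hQ.exists_extension_union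
    (hA.inter hZ₂) hK (hf.mono inter_subset_left) hg₀K hfg₀ hfQ
    fun z hz => (hg₀PQ (hVU₀ hz.1)).2
  have hcl : closure Z₁ᶜ ⊆ Z₂ := closure_minimal (compl_subset_iff_union.2 hZ) hZ₂
  classical
  set W := (Z₁ᶜ ∪ U₁) ∩ (Z₂ᶜ ∪ U₂) ∩ ((Z₁ ∩ Z₂)ᶜ ∪ V)
  have hWU₁ : W ∩ Z₁ ⊆ U₁ := fun z hz => hz.1.1.1.resolve_left (not_not.2 hz.2)
  have hWU₂ : W ∩ Z₂ ⊆ U₂ := fun z hz => hz.1.1.2.resolve_left (not_not.2 hz.2)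
  refine ⟨W, ?_, ?_, Z₁.piecewise g₁ g₂, ?_, fun a ha => ?_, ?_⟩
  · exact ((hZ₁.isOpen_compl.union hU₁).inter (hZ₂.isOpen_compl.union hU₂)).inter
      ((hZ₁.inter hZ₂).isOpen_compl.union hV)
  · exact subset_inter (subset_inter ((inter_subset _ _ _).1 (subset_union_left.trans hU₁sub))
      ((inter_subset _ _ _).1 (subset_union_left.trans hU₂sub))) ((inter_subset _ _ _).1 hAV)
  · refine ContinuousOn.piecewise (fun z ⟨hzW, hz⟩ => ?_) (hg₁.mono (hZ₁.closure_eq.symm ▸ hWU₁))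
      (hg₂.mono ((inter_subset_inter_right W hcl).trans hWU₂))
    have hz₁₂ : z ∈ Z₁ ∩ Z₂ :=
      ⟨hZ₁.frontier_subset hz, hcl (frontier_subset_closure ((frontier_compl Z₁).symm ▸ hz))⟩
    have hzK : z ∈ K := ⟨subset_closure (hzW.2.resolve_left (not_not.2 hz₁₂)), hz₁₂⟩
    rw [hg₁g₀ hzK, hg₂g₀ hzK]
  · by_cases h : a ∈ Z₁
    · rw [piecewise_eq_of_mem _ _ _ h, hg₁f ⟨ha, h⟩]
    · rw [piecewise_eq_of_notMem _ _ _ h, hg₂f ⟨ha, compl_subset_iff_union.2 hZ h⟩]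
  · intro z hz
    by_cases h : z ∈ Z₁
    · exact piecewise_eq_of_mem _ _ _ h ▸ Or.inl (hg₁P (hWU₁ ⟨hz, h⟩))
    · exact piecewise_eq_of_notMem _ _ _ h ▸
        Or.inr (hg₂Q (hWU₂ ⟨hz, compl_subset_iff_union.2 hZ h⟩))

instance (n : ℕ) [NeZero n] : TietzeExtension.{u} (EuclideanHalfSpace n) := by
  let r : EuclideanSpace ℝ (Fin n) → EuclideanSpace ℝ (Fin n) := fun x =>
    x + max (-x 0) 0 • EuclideanSpace.single 0 1
  have hr : ∀ x, 0 ≤ r x 0 := fun x => by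
    simp only [PiLp.add_apply, PiLp.smul_apply, PiLp.single_eq_same, smul_eq_mul, mul_one, r]
    linarith [le_max_left (-x.ofLp 0) 0]
  refine .of_retract ⟨Subtype.val, continuous_subtype_val⟩ ⟨fun x => ⟨r x, hr x⟩, by fun_prop⟩ ?_
  ext x : 2
  simpa [r] using x.2

theorem isANE_univ_of_compactSpace (H M : Type*) [TopologicalSpace H] [TietzeExtension.{0} H]
    [TopologicalSpace M] [ChartedSpace H M] [CompactSpace M] : IsANE (univ : Set M) := by
  have hchart {P : Set M} (x : M) (hP : IsOpen P) (hPx : P ⊆ (chartAt H x).source) : IsANE P :=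
    ((chartAt H x).isOpen_image_of_subset_source hP hPx).isANE.of_image_openPartialHomeomorph _ hPx
  obtain ⟨t, ht⟩ := isCompact_univ.elim_finite_subcover (fun x : M => (chartAt H x).source)
    (fun x => (chartAt H x).open_source) fun x _ => mem_iUnion.2 ⟨x, mem_chart_source H x⟩
  classical
  suffices ∀ s : Finset M, IsANE (⋃ x ∈ s, (chartAt H x).source) from
    univ_subset_iff.1 ht ▸ this t
  intro s
  induction s using Finset.induction_on with
  | empty => simpa using isANE_empty
  | insert x s _ ih =>
    have hs : IsOpen (⋃ y ∈ s, (chartAt H y).source) :=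
      isOpen_biUnion fun y _ => (chartAt H y).open_source
    rw [Finset.set_biUnion_insert]
    exact IsANE.union (chartAt H x).open_source hs (hchart x (chartAt H x).open_source subset_rfl)
      ih (hchart x ((chartAt H x).open_source.inter hs) inter_subset_left)

section DistFrom

variable {X Y : Type*} [PseudoMetricSpace X] [PseudoMetricSpace Y]

def distFrom (ι : C(X, Y)) (y : Y) : C(X, ℝ) := ⟨fun x => dist y (ι x), by fun_prop⟩

theorem distFrom_apply_of_isometry {ι : C(X, Y)} (hι : Isometry ι) (a : X) :
    distFrom ι (ι a) = distFrom (.id X) a :=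
  ContinuousMap.ext fun x => hι.dist_eq a x

variable [CompactSpace X]

theorem lipschitzWith_distFrom (ι : C(X, Y)) : LipschitzWith 1 (distFrom ι) :=
  .of_dist_le_mul fun y y' => by
    rw [NNReal.coe_one, one_mul]
    exact (ContinuousMap.dist_le dist_nonneg).2 fun x => dist_dist_dist_le_left y y' (ι x)

theorem isometry_distFrom_id : Isometry (distFrom (.id X)) := by
  refine .of_dist_eq fun a b =>
    le_antisymm ((lipschitzWith_distFrom _).dist_le_mul a b |>.trans_eq (one_mul _)) ?_
  simpa [distFrom] using
    ContinuousMap.dist_apply_le_dist (f := distFrom (.id X) a) (g := distFrom (.id X) b) b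

end DistFrom

theorem IsANE.exists_retraction_of_forall_edist_lt {X : Type} [MetricSpace X] [CompactSpace X]
    (hX : IsANE (univ : Set X)) :
    ∃ ε > 0, ∀ {Y : Type u} [PseudoMetricSpace Y] (ι : X → Y), Isometry ι →
      (∀ y, ∃ x, edist y (ι x) < ε) → ∃ R : Y → X, Continuous R ∧ Function.LeftInverse R ι := by
  rcases isEmpty_or_nonempty X with hXe | hXne
  · refine ⟨1, one_pos, fun ι _ hY => ?_⟩
    have : IsEmpty _ := ⟨fun y => isEmptyElim (hY y).choose⟩
    exact ⟨fun y => (hY y).choose, continuous_of_discreteTopology, isEmptyElim⟩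
  set κ := distFrom (.id X)
  have hκ : Isometry κ := isometry_distFrom_id
  have hκinv : ContinuousOn (Function.invFun κ) (range κ) := by
    refine LipschitzOnWith.continuousOn (K := 1) (.of_dist_le_mul ?_)
    rintro _ ⟨a, rfl⟩ _ ⟨b, rfl⟩
    simp [Function.leftInverse_invFun hκ.injective _, hκ.dist_eq]
  obtain ⟨U, hU, hκU, g, hg, hgκ, -⟩ := hX C(X, ℝ) (range κ) (Function.invFun κ)
    (isCompact_range hκ.continuous).isClosed hκinv (mapsTo_univ _ _)
  obtain ⟨δ, hδ, hδU⟩ := (isCompact_range hκ.continuous).exists_thickening_subset_open hU hκU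
  refine ⟨ENNReal.ofReal δ, by simpa using hδ, fun ι hι hY => ?_⟩
  set F := distFrom ⟨ι, hι.continuous⟩
  have hFκ (x : X) : F (ι x) = κ x := distFrom_apply_of_isometry hι x
  have hFU (y) : F y ∈ U := by
    obtain ⟨x, hx⟩ := hY y
    refine hδU (Metric.mem_thickening_iff.2 ⟨κ x, mem_range_self x, ?_⟩)
    calc dist (F y) (κ x) = dist (F y) (F (ι x)) := by rw [hFκ]
      _ ≤ dist y (ι x) := (lipschitzWith_distFrom _).dist_le_mul y (ι x) |>.trans_eq (one_mul _)
      _ < δ := edist_lt_ofReal.1 hx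
  refine ⟨g ∘ F, hg.comp_continuous (lipschitzWith_distFrom _).continuous hFU, fun x => ?_⟩
  simp [hFκ, hgκ (mem_range_self x), Function.leftInverse_invFun hκ.injective x]

theorem IsThickening.exists_edist_lt {X Y : Type*} [MetricSpace X] [MetricSpace Y] {ε : ℝ≥0∞}
    {j : X → Y} (h : IsThickening ε j) (y : Y) : ∃ x, edist y (j x) < ε := by
  have hy : Metric.infEDist y (range j) < ε :=
    (Metric.infEDist_le_hausdorffEDist_of_mem (mem_univ y)).trans_lt
      (by rw [Metric.hausdorffEDist_comm]; exact h.2)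
  obtain ⟨_, ⟨x, rfl⟩, hx⟩ := Metric.infEDist_lt_iff.1 hy
  exact ⟨x, hx⟩

theorem exists_retraction_of_thickening_general
    (M : Type) [TopologicalSpace M] [CompactSpace M]
    [ChartedSpace (EuclideanHalfSpace 2) M]
    (X : Type) [MetricSpace X] [CompactSpace X]
    (hhomeo : Nonempty (M ≃ₜ X))
    (Y : ℕ → Type) [mY : ∀ n, MetricSpace (Y n)]
    (ι : ∀ n, X → Y n)
    (hthick : ∀ n : ℕ, 0 < n → IsThickening (1 / (n : ℝ≥0∞)) (ι n)) :
    ∃ n : ℕ, 0 < n ∧ ∃ R : Y n → X, Continuous R ∧ ∀ x : X, R (ι n x) = x := by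
  obtain ⟨ε, hε, hretract⟩ := (isANE_univ_of_homeomorph hhomeo.some
    (isANE_univ_of_compactSpace (EuclideanHalfSpace 2) M)).exists_retraction_of_forall_edist_lt
  obtain ⟨n, hn⟩ := ENNReal.exists_inv_nat_lt hε.ne'
  have hn₀ : 0 < n := Nat.pos_of_ne_zero fun h => by simp [h] at hn
  obtain ⟨R, hR, hRι⟩ := hretract (ι n) (hthick n hn₀).1 fun y =>
    ((hthick n hn₀).exists_edist_lt y).imp fun x hx => hx.trans (one_div (n : ℝ≥0∞) ▸ hn)
  exact ⟨n, hn₀, R, hR, hRι⟩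

/-- Lemma 2.2: for a compact metric surface `X` and a family of
`(1/n)`-thickenings `Y n` of `X`, some thickening admits a continuous retraction onto
`X`. -/
theorem exists_retraction_of_thickening
    (M : Type) [TopologicalSpace M] [T2Space M] [CompactSpace M] [ConnectedSpace M]
    [ChartedSpace (EuclideanHalfSpace 2) M] [IsManifold (𝓡∂ 2) (⊤ : ℕ∞) M]
    (X : Type) [MetricSpace X] [CompactSpace X]
    (hhomeo : Nonempty (M ≃ₜ X))
    (Y : ℕ → Type) [mY : ∀ n, MetricSpace (Y n)]
    (ι : ∀ n, X → Y n)
    (hthick : ∀ n : ℕ, 0 < n → IsThickening (1 / (n : ℝ≥0∞)) (ι n)) :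
    ∃ n : ℕ, 0 < n ∧ ∃ R : Y n → X, Continuous R ∧ ∀ x : X, R (ι n x) = x :=
  exists_retraction_of_thickening_general M X hhomeo Y (mY := mY) ι hthick
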